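/- arXiv:1102.4310 — 4 statements merged into one kernel-verified Lean document; each statement's English description precedes it below -/
import Mathlib

section
/- Every element of ℤ[ζ] has a unique expression of the form x - ζ⁻¹ y with x, y ∈ ℤ[ω], where ζ = exp(2πi/5) and ω = (1+√5)/2. -/
noncomputable def ζ : ℂ := Complex.exp (2 * Real.pi * Complex.I / 5)
noncomputable def ω : ℂ := (1 + Real.sqrt 5) / 2

private lemma zeta_pow (k : ℕ) : ζ ^ k = Complex.exp (((2 * Real.pi * k / 5 : ℝ) : ℂ) * Complex.I) := by
  rw [ζ, ← Complex.exp_nat_mul]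
  push_cast
  ring_nf

private lemma zeta_im : ζ.im = Real.sin (2 * Real.pi / 5) := by
  have := zeta_pow 1
  rw [pow_one] at this
  rw [this]
  rw [Complex.exp_ofReal_mul_I_im]
  norm_num

private lemma zeta_im_pos : 0 < ζ.im := by
  rw [zeta_im]
  apply Real.sin_pos_of_pos_of_lt_pi
  · positivity
  · nlinarith [Real.pi_pos]

private lemma zeta_ne_zero : ζ ≠ 0 := Complex.exp_ne_zero _

private lemma zeta_pow_five : ζ ^ 5 = 1 := by
  rw [zeta_pow 5]
  have : ((2 * Real.pi * (5:ℕ) / 5 : ℝ) : ℂ) * Complex.I = 2 * Real.pi * Complex.I := by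
    push_cast; ring
  rw [this, Complex.exp_two_pi_mul_I]

private lemma zeta_ne_one : ζ ≠ 1 := by
  intro h
  have := zeta_im_pos
  rw [h] at this
  simp at this

private lemma zeta_sum : ζ^4 + ζ^3 + ζ^2 + ζ + 1 = 0 := by
  have h5 : ζ ^ 5 - 1 = 0 := by rw [zeta_pow_five]; ring
  have hf : (ζ - 1) * (ζ^4 + ζ^3 + ζ^2 + ζ + 1) = 0 := by linear_combination h5
  rcases mul_eq_zero.mp hf with h | h
  · exact absurd (sub_eq_zero.mp h) zeta_ne_one
  · exact h

private lemma zeta4 : ζ^4 = -1 - ζ - ζ^2 - ζ^3 := by linear_combination zeta_sum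
private lemma zeta6 : ζ^6 = ζ := by
  calc ζ^6 = ζ^5 * ζ := by ring
  _ = ζ := by rw [zeta_pow_five]; ring
private lemma zeta7 : ζ^7 = ζ^2 := by
  calc ζ^7 = ζ^5 * ζ^2 := by ring
  _ = ζ^2 := by rw [zeta_pow_five]; ring

private lemma zeta_inv : ζ⁻¹ = ζ^4 := by
  have : ζ * ζ^4 = 1 := by
    calc ζ * ζ^4 = ζ^5 := by ring
    _ = 1 := zeta_pow_five
  have h4 : ζ^4 * ζ = 1 := by linear_combination this
  exact inv_eq_of_mul_eq_one_left h4

private lemma omega_eq : ω = -ζ^2 - ζ^3 := by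
  have h2 : ζ^2 = Complex.exp (((4 * Real.pi / 5 : ℝ) : ℂ) * Complex.I) := by
    rw [zeta_pow 2]; norm_num; ring_nf
  have h3 : ζ^3 = Complex.exp (((6 * Real.pi / 5 : ℝ) : ℂ) * Complex.I) := by
    rw [zeta_pow 3]; norm_num; ring_nf
  have hcos4 : Real.cos (4 * Real.pi / 5) = -((1 + Real.sqrt 5) / 4) := by
    have : (4 * Real.pi / 5) = Real.pi - Real.pi / 5 := by ring
    rw [this, Real.cos_pi_sub, Real.cos_pi_div_five]
  have hcos6 : Real.cos (6 * Real.pi / 5) = -((1 + Real.sqrt 5) / 4) := by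
    have : (6 * Real.pi / 5) = Real.pi + Real.pi / 5 := by ring
    rw [this]
    rw [show Real.cos (Real.pi + Real.pi / 5) = -Real.cos (Real.pi / 5) by
      rw [Real.cos_add]; simp]
    rw [Real.cos_pi_div_five]
  have hsin4 : Real.sin (4 * Real.pi / 5) = Real.sin (Real.pi / 5) := by
    have : (4 * Real.pi / 5) = Real.pi - Real.pi / 5 := by ring
    rw [this, Real.sin_pi_sub]
  have hsin6 : Real.sin (6 * Real.pi / 5) = -Real.sin (Real.pi / 5) := by
    have : (6 * Real.pi / 5) = Real.pi + Real.pi / 5 := by ring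
    rw [this, Real.sin_add]; simp
  apply Complex.ext
  · rw [ω]
    simp only [Complex.sub_re, Complex.neg_re, h2, h3,
      Complex.exp_ofReal_mul_I_re, hcos4, hcos6]
    norm_num
    ring
  · rw [ω]
    simp only [Complex.sub_im, Complex.neg_im, h2, h3,
      Complex.exp_ofReal_mul_I_im, hsin4, hsin6]
    norm_num

private lemma mem_adjoin_omega (e f : ℤ) : (e : ℂ) + (f : ℂ) * ω ∈ Algebra.adjoin ℤ ({ω} : Set ℂ) := by
  have hω : ω ∈ Algebra.adjoin ℤ ({ω} : Set ℂ) := Algebra.subset_adjoin rfl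
  exact add_mem (intCast_mem _ e) (mul_mem (intCast_mem _ f) hω)

private lemma im_zero_of_mem {w : ℂ} (hw : w ∈ Algebra.adjoin ℤ ({ω} : Set ℂ)) : w.im = 0 := by
  induction hw using Algebra.adjoin_induction with
  | mem x hx =>
    rcases hx with rfl
    rw [ω]
    simp [Complex.div_im]
  | algebraMap r => simp
  | add x y _ _ hx hy => simp [hx, hy]
  | mul x y _ _ hx hy => simp [Complex.mul_im, hx, hy]

private lemma repr_of_mem {z : ℂ} (hz : z ∈ Algebra.adjoin ℤ ({ζ} : Set ℂ)) :
    ∃ a b c d : ℤ, z = (a : ℂ) + b * ζ + c * ζ^2 + d * ζ^3 := by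
  induction hz using Algebra.adjoin_induction with
  | mem x hx =>
    rcases hx with rfl
    exact ⟨0, 1, 0, 0, by simp⟩
  | algebraMap r => exact ⟨r, 0, 0, 0, by simp⟩
  | add x y _ _ hx hy =>
    obtain ⟨a, b, c, d, rfl⟩ := hx
    obtain ⟨a', b', c', d', rfl⟩ := hy
    exact ⟨a + a', b + b', c + c', d + d', by push_cast; ring⟩
  | mul x y _ _ hx hy =>
    obtain ⟨a, b, c, d, rfl⟩ := hx
    obtain ⟨e, f, g, h, rfl⟩ := hy
    refine ⟨a*e + c*h + d*g - (b*h + c*g + d*f),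
            a*f + b*e + d*h - (b*h + c*g + d*f),
            a*g + b*f + c*e - (b*h + c*g + d*f),
            a*h + b*g + c*f + d*e - (b*h + c*g + d*f), ?_⟩
    push_cast
    linear_combination ((b:ℂ)*h + c*g + d*f) * zeta4 + ((c:ℂ)*h + d*g) * zeta_pow_five + (d:ℂ)*h * zeta6

/-- Every element of ℤ[ζ] is uniquely of the form x - ζ⁻¹ y with x, y ∈ ℤ[ω]. -/
theorem unique_representation_x_minus_zetainv_y :
    ∀ z ∈ Algebra.adjoin ℤ ({ζ} : Set ℂ),
      ∃! p : ℂ × ℂ,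
        p.1 ∈ Algebra.adjoin ℤ ({ω} : Set ℂ) ∧
        p.2 ∈ Algebra.adjoin ℤ ({ω} : Set ℂ) ∧
        z = p.1 - ζ⁻¹ * p.2 := by
  intro z hz
  obtain ⟨a, b, c, d, rfl⟩ := repr_of_mem hz
  have heq0 : (a : ℂ) + b * ζ + c * ζ^2 + d * ζ^3 = (((a - b + c - d : ℤ) : ℂ) + ((b - c : ℤ) : ℂ) * ω) - ζ⁻¹ * (((b + d - c : ℤ) : ℂ) + ((c - d : ℤ) : ℂ) * ω) := by
    rw [zeta_inv, omega_eq]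
    push_cast
    linear_combination ((b:ℂ) + d - c) * zeta4 - ((c:ℂ) - d) * zeta6 - ((c:ℂ) - d) * zeta7
  refine ⟨⟨(((a - b + c - d : ℤ) : ℂ) + ((b - c : ℤ) : ℂ) * ω), (((b + d - c : ℤ) : ℂ) + ((c - d : ℤ) : ℂ) * ω)⟩, ⟨mem_adjoin_omega _ _, mem_adjoin_omega _ _, heq0⟩, ?_⟩
  rintro ⟨x, y⟩ ⟨hx, hy, heq⟩
  have hx1 := im_zero_of_mem hx
  have hy1 := im_zero_of_mem hy
  have hx2 := im_zero_of_mem (mem_adjoin_omega (a - b + c - d) (b - c))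
  have hy2 := im_zero_of_mem (mem_adjoin_omega (b + d - c) (c - d))
  simp only at hx1 hy1 heq
  have key : ζ⁻¹ * (y - (((b + d - c : ℤ) : ℂ) + ((c - d : ℤ) : ℂ) * ω)) = x - (((a - b + c - d : ℤ) : ℂ) + ((b - c : ℤ) : ℂ) * ω) := by
    rw [heq0] at heq
    linear_combination heq
  have hinv_im : ζ⁻¹.im ≠ 0 := by
    rw [Complex.inv_im]
    have h1 := zeta_im_pos
    have h2 : Complex.normSq ζ > 0 := Complex.normSq_pos.mpr zeta_ne_zero
    intro h
    rw [div_eq_zero_iff] at h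
    rcases h with h | h
    · linarith
    · linarith
  have hyim : (y - (((b + d - c : ℤ) : ℂ) + ((c - d : ℤ) : ℂ) * ω)).im = 0 := by rw [Complex.sub_im, hy1, hy2]; ring
  have hxim : (x - (((a - b + c - d : ℤ) : ℂ) + ((b - c : ℤ) : ℂ) * ω)).im = 0 := by rw [Complex.sub_im, hx1, hx2]; ring
  have him := congrArg Complex.im key
  rw [Complex.mul_im, hyim, hxim] at him
  simp only [mul_zero, zero_add] at him
  have hyre : (y - (((b + d - c : ℤ) : ℂ) + ((c - d : ℤ) : ℂ) * ω)).re = 0 := (mul_eq_zero.mp him).resolve_left hinv_im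
  have hy0 : y = (((b + d - c : ℤ) : ℂ) + ((c - d : ℤ) : ℂ) * ω) := sub_eq_zero.mp (Complex.ext hyre hyim)
  have hx0 : x = (((a - b + c - d : ℤ) : ℂ) + ((b - c : ℤ) : ℂ) * ω) := by
    have h0 : ζ⁻¹ * (y - (((b + d - c : ℤ) : ℂ) + ((c - d : ℤ) : ℂ) * ω)) = 0 := by rw [hy0]; ring
    rw [h0] at key
    exact sub_eq_zero.mp key.symm
  exact Prod.ext hx0 hy0
end

section
/- Let L = [0,1) + (-ζ⁻¹)·[0,1) ⊂ ℂ with ζ = exp(2πi/5), and define T : L → L by T(x) = x/ζ if Im(x/ζ) ≥ 0 and T(x) = (x-1)/ζ otherwise. Then T maps L bijectively onto L. -/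
/-- The half-open lozenge L = [0,1) + (-ζ⁻¹)[0,1). -/
def L : Set ℂ :=
  {z | ∃ s t : ℝ, s ∈ Set.Ico (0:ℝ) 1 ∧ t ∈ Set.Ico (0:ℝ) 1 ∧ z = s + t * (-ζ⁻¹)}

/-- The pentagonal piecewise rotation. -/
noncomputable def T (x : ℂ) : ℂ := if 0 ≤ (x / ζ).im then x / ζ else (x - 1) / ζ

/-- The scaled-down lozenge L' = ω⁻² L. -/
noncomputable def L' : Set ℂ := (fun z => ω⁻¹ ^ 2 * z) '' L

/-!
Write points of ℂ in the oblique coordinates z = s + t·(-ζ⁻¹). Since ζ + ζ⁻¹ = 2 cos(2π/5) = φ⁻¹,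
division by ζ is the linear map (s, t) ↦ (t, t/φ - s), and subtracting 1 beforehand adds 1 to
the second coordinate. On the unit square t/φ - s lies in (-1, 1), and the branch chosen by T is
exactly the one bringing it back into [0, 1): in these coordinates T is
(s, t) ↦ (t, fract (t/φ - s)), whose inverse on the square is (a, b) ↦ (fract (a/φ - b), a).
-/

open Real Set goldenRatio

abbrev unitSquare : Set (ℝ × ℝ) := Ico 0 1 ×ˢ Ico 0 1

theorem fract_sub_fract_sub {x y : ℝ} (hy : y ∈ Ico 0 1) :
    Int.fract (x - Int.fract (x - y)) = y := by
  rw [Int.fract_eq_iff]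
  exact ⟨hy.1, hy.2, ⌊x - y⌋, by rw [← Int.self_sub_fract]; ring⟩

noncomputable def fractShear (c : ℝ) (p : ℝ × ℝ) : ℝ × ℝ :=
  (p.2, Int.fract (c * p.2 - p.1))

theorem bijOn_fractShear (c : ℝ) : BijOn (fractShear c) unitSquare unitSquare := by
  refine InvOn.bijOn (f' := fun q => (Int.fract (c * q.1 - q.2), q.1)) ⟨?_, ?_⟩ ?_ ?_
  · exact fun p hp => Prod.ext (fract_sub_fract_sub hp.1) rfl
  · exact fun q hq => Prod.ext rfl (fract_sub_fract_sub hq.2)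
  · exact fun p hp => ⟨hp.2, Int.fract_nonneg _, Int.fract_lt_one _⟩
  · exact fun q hq => ⟨⟨Int.fract_nonneg _, Int.fract_lt_one _⟩, hq.1⟩

theorem two_mul_cos_two_pi_div_five : 2 * cos (2 * π / 5) = φ⁻¹ := by
  rw [show 2 * π / 5 = 2 * (π / 5) by ring, cos_two_mul, cos_pi_div_five, inv_goldenRatio,
    goldenConj]
  nlinarith [sq_sqrt (show (0:ℝ) ≤ 5 by norm_num)]

theorem zeta_eq_exp : ζ = Complex.exp ((2 * π / 5 : ℝ) * Complex.I) := by
  rw [ζ]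
  push_cast
  ring_nf

theorem zeta_add_zeta_inv : ζ + ζ⁻¹ = (φ⁻¹ : ℝ) := by
  rw [← two_mul_cos_two_pi_div_five, zeta_eq_exp, ← Complex.exp_neg, ← neg_mul]
  push_cast
  rw [Complex.two_cos]

theorem im_neg_zeta_inv : (-ζ⁻¹).im = sin (2 * π / 5) := by
  have h : -ζ⁻¹ = ζ - (φ⁻¹ : ℝ) := by rw [← zeta_add_zeta_inv]; ring
  rw [h, Complex.sub_im, Complex.ofReal_im, sub_zero, zeta_eq_exp, Complex.exp_ofReal_mul_I_im]

theorem sin_two_pi_div_five_pos : 0 < sin (2 * π / 5) :=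
  sin_pos_of_pos_of_lt_pi (by positivity) (by linarith [pi_pos])

noncomputable def lozengeCoord (p : ℝ × ℝ) : ℂ := p.1 + p.2 * (-ζ⁻¹)

theorem L_eq_image_lozengeCoord : L = lozengeCoord '' unitSquare := by
  ext z
  simp only [L, lozengeCoord, mem_ofPred_eq, mem_image, Prod.exists, mem_prod]
  constructor
  · rintro ⟨s, t, hs, ht, rfl⟩
    exact ⟨s, t, ⟨hs, ht⟩, rfl⟩
  · rintro ⟨s, t, ⟨hs, ht⟩, rfl⟩
    exact ⟨s, t, hs, ht, rfl⟩

theorem im_lozengeCoord (p : ℝ × ℝ) : (lozengeCoord p).im = p.2 * sin (2 * π / 5) := by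
  simp only [lozengeCoord, Complex.add_im, Complex.ofReal_im, Complex.mul_im, Complex.ofReal_re,
    im_neg_zeta_inv]
  ring

theorem lozengeCoord_injective : Function.Injective lozengeCoord := by
  rintro ⟨s, t⟩ ⟨s', t'⟩ h
  have ht : t = t' := by
    simpa [im_lozengeCoord, sin_two_pi_div_five_pos.ne'] using congrArg Complex.im h
  subst ht
  simpa [lozengeCoord] using h

theorem lozengeCoord_div_zeta (s t : ℝ) :
    lozengeCoord (s, t) / ζ = lozengeCoord (t, φ⁻¹ * t - s) := by
  have hζ : ζ ≠ 0 := Complex.exp_ne_zero _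
  rw [div_eq_iff hζ]
  simp only [lozengeCoord, Complex.ofReal_sub, Complex.ofReal_mul]
  linear_combination
    -(t : ℂ) * zeta_add_zeta_inv + ((φ⁻¹ : ℝ) * t - s : ℂ) * inv_mul_cancel₀ hζ

theorem lozengeCoord_sub_one_div_zeta (s t : ℝ) :
    (lozengeCoord (s, t) - 1) / ζ = lozengeCoord (t, φ⁻¹ * t - s + 1) := by
  rw [sub_div, lozengeCoord_div_zeta]
  simp only [lozengeCoord]
  push_cast
  ring

theorem T_lozengeCoord {s t : ℝ} (hs : s ∈ Ico 0 1) (ht : t ∈ Ico 0 1) :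
    T (lozengeCoord (s, t)) = lozengeCoord (fractShear φ⁻¹ (s, t)) := by
  have hφ0 : 0 ≤ φ⁻¹ * t := mul_nonneg (inv_nonneg.mpr goldenRatio_pos.le) ht.1
  have hφ1 : φ⁻¹ * t < 1 := by
    nlinarith [inv_lt_one_of_one_lt₀ one_lt_goldenRatio, ht.1, ht.2]
  have hbranch : 0 ≤ (lozengeCoord (t, φ⁻¹ * t - s)).im ↔ 0 ≤ φ⁻¹ * t - s := by
    rw [im_lozengeCoord, mul_nonneg_iff_of_pos_right sin_two_pi_div_five_pos]
  rw [T, fractShear, lozengeCoord_div_zeta]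
  split_ifs with h <;> rw [hbranch] at h
  · rw [Int.fract_eq_self.mpr ⟨h, by linarith [hs.1]⟩]
  · rw [lozengeCoord_sub_one_div_zeta,
      (Int.fract_eq_iff (b := φ⁻¹ * t - s + 1)).mpr ⟨by linarith [hs.2], by linarith, -1, by
        push_cast; ring⟩]

theorem T_bijective_on_L : Set.BijOn T L L := by
  rw [L_eq_image_lozengeCoord, ← bijOn_comp_iff lozengeCoord_injective.injOn]
  exact (lozengeCoord_injective.bijOn_image.comp (bijOn_fractShear φ⁻¹)).congr
    fun ⟨_, _⟩ ⟨hs, ht⟩ => (T_lozengeCoord hs ht).symm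
end

section
/- Let ζ = exp(2πi/5), L = [0,1) + (-ζ⁻¹)[0,1), and T as in the pentagonal piecewise rotation (T(x) = x/ζ if Im(x/ζ) ≥ 0, else (x-1)/ζ). Then T maps L ∩ ℤ[ζ] bijectively onto L ∩ ℤ[ζ]. -/
namespace Penta

noncomputable def a : ℝ := Real.cos (2 * Real.pi / 5)
noncomputable def b : ℝ := Real.sin (2 * Real.pi / 5)

lemma hζab : ζ = (a : ℂ) + (b : ℂ) * Complex.I := by
  rw [ζ, show (2 * (Real.pi:ℂ) * Complex.I / 5) = ((2*Real.pi/5 : ℝ) : ℂ) * Complex.I by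
    push_cast; ring, Complex.exp_mul_I, a, b, Complex.ofReal_cos, Complex.ofReal_sin]

lemma hb_pos : 0 < b :=
  Real.sin_pos_of_pos_of_lt_pi (by positivity) (by nlinarith [Real.pi_pos])

lemma ha_nonneg : 0 ≤ a :=
  Real.cos_nonneg_of_mem_Icc ⟨by nlinarith [Real.pi_pos], by nlinarith [Real.pi_pos]⟩

lemma ha_lt : 2 * a < 1 := by
  have h := Real.cos_lt_cos_of_nonneg_of_le_pi (x := Real.pi/3) (y := 2*Real.pi/5)
    (by positivity) (by nlinarith [Real.pi_pos]) (by nlinarith [Real.pi_pos])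
  rw [Real.cos_pi_div_three] at h
  unfold a; linarith

lemma hζne : ζ ≠ 0 := Complex.exp_ne_zero _

lemma key : ζ^2 + 1 = 2*(a:ℂ)*ζ := by
  have h : (b:ℝ)^2 + a^2 = 1 := Real.sin_sq_add_cos_sq _
  have h' : (b:ℂ)^2 + (a:ℂ)^2 = 1 := by exact_mod_cast h
  rw [hζab]; linear_combination (b:ℂ)^2 * Complex.I_sq - h'

lemma hζ5 : ζ ^ 5 = 1 := by
  rw [ζ, ← Complex.exp_nat_mul,
    show ((5:ℕ) : ℂ) * (2 * (Real.pi:ℂ) * Complex.I / 5) = 2 * Real.pi * Complex.I by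
      push_cast; ring]
  exact Complex.exp_two_pi_mul_I

lemma hinv : ζ⁻¹ = ζ^4 := by
  have h : ζ^4 * ζ = 1 := by rw [← pow_succ]; exact hζ5
  exact (eq_inv_of_mul_eq_one_left h).symm

lemma hbb : -ζ⁻¹ = ζ - 2*(a:ℂ) := by
  have h : (ζ - 2*(a:ℂ)) * ζ = -1 := by linear_combination key
  rw [(eq_div_iff hζne).mpr h, neg_div, one_div]

/-- coordinates -/
noncomputable def F (s t : ℝ) : ℂ := (s:ℂ) + (t:ℂ) * (ζ - 2*(a:ℂ))

lemma F_mem (s t : ℝ) (hs : s ∈ Set.Ico (0:ℝ) 1) (ht : t ∈ Set.Ico (0:ℝ) 1) : F s t ∈ L :=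
  ⟨s, t, hs, ht, by rw [hbb]; rfl⟩

lemma mem_L (z : ℂ) (hz : z ∈ L) :
    ∃ s t : ℝ, s ∈ Set.Ico (0:ℝ) 1 ∧ t ∈ Set.Ico (0:ℝ) 1 ∧ z = F s t := by
  obtain ⟨s, t, hs, ht, rfl⟩ := hz
  exact ⟨s, t, hs, ht, by rw [F, ← hbb]⟩

lemma F_im (s t : ℝ) : (F s t).im = t * b := by
  simp [F, hζab]

lemma F_re (s t : ℝ) : (F s t).re = s - t * a := by
  simp [F, hζab]; ring

lemma F_inj {s₁ t₁ s₂ t₂ : ℝ} (h : F s₁ t₁ = F s₂ t₂) : s₁ = s₂ ∧ t₁ = t₂ := by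
  have ht : t₁ = t₂ := by
    have := congrArg Complex.im h
    rw [F_im, F_im] at this
    exact mul_right_cancel₀ hb_pos.ne' this
  have hs := congrArg Complex.re h
  rw [F_re, F_re, ht] at hs
  exact ⟨by linarith, ht⟩

lemma Tdiv (s t : ℝ) : F s t / ζ = F t (2*a*t - s) := by
  rw [div_eq_iff hζne]; unfold F; push_cast
  linear_combination ((s:ℂ) - 2*a*t) * key

lemma T_F (s t : ℝ) :
    T (F s t) = if 0 ≤ 2*a*t - s then F t (2*a*t - s) else F t (2*a*t - s + 1) := by
  have him : (F s t / ζ).im = (2*a*t - s) * b := by rw [Tdiv, F_im]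
  unfold T
  by_cases h : 0 ≤ 2*a*t - s
  · rw [if_pos (by rw [him]; exact mul_nonneg h hb_pos.le), if_pos h, Tdiv]
  · rw [if_neg (by rw [him]; exact not_le.mpr (mul_neg_of_neg_of_pos (not_le.mp h) hb_pos)),
      if_neg h]
    have h1 : F s t - 1 = F (s-1) t := by unfold F; push_cast; ring
    rw [h1, Tdiv, show 2*a*t - (s-1) = 2*a*t - s + 1 by ring]

lemma hζR : ζ ∈ Algebra.adjoin ℤ ({ζ} : Set ℂ) := Algebra.subset_adjoin rfl

lemma hinvR : ζ⁻¹ ∈ Algebra.adjoin ℤ ({ζ} : Set ℂ) := by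
  rw [hinv]; exact pow_mem hζR 4

lemma T_mem {x : ℂ} (hx : x ∈ Algebra.adjoin ℤ ({ζ} : Set ℂ)) :
    T x ∈ Algebra.adjoin ℤ ({ζ} : Set ℂ) := by
  unfold T; split
  · rw [div_eq_mul_inv]; exact mul_mem hx hinvR
  · rw [div_eq_mul_inv]; exact mul_mem (sub_mem hx (one_mem _)) hinvR

end Penta

open Penta in
theorem T_bijective_on_L_inter_ring :
    Set.BijOn T (L ∩ {z | z ∈ Algebra.adjoin ℤ ({ζ} : Set ℂ)})
      (L ∩ {z | z ∈ Algebra.adjoin ℤ ({ζ} : Set ℂ)}) := by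
  constructor
  · -- MapsTo
    rintro x ⟨hxL, hxR⟩
    obtain ⟨s, t, hs, ht, rfl⟩ := mem_L x hxL
    refine ⟨?_, T_mem hxR⟩
    rw [T_F]
    split_ifs with h
    · exact F_mem _ _ ht ⟨h, by nlinarith [ha_nonneg, ha_lt, ht.1, ht.2, hs.1]⟩
    · exact F_mem _ _ ht ⟨by nlinarith [ha_nonneg, ht.1, hs.2], by linarith [not_le.mp h]⟩
  constructor
  · -- InjOn
    rintro x ⟨hxL, _⟩ y ⟨hyL, _⟩ hxy
    obtain ⟨s₁, t₁, hs₁, ht₁, rfl⟩ := mem_L x hxL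
    obtain ⟨s₂, t₂, hs₂, ht₂, rfl⟩ := mem_L y hyL
    rw [T_F, T_F] at hxy
    split_ifs at hxy with h1 h2 h2 <;>
      obtain ⟨het, heu⟩ := F_inj hxy
    · rw [show s₁ = s₂ by rw [het] at heu; linarith, het]
    · exfalso; rw [het] at heu; linarith [hs₁.1, hs₂.2]
    · exfalso; rw [het] at heu; linarith [hs₂.1, hs₁.2]
    · rw [show s₁ = s₂ by rw [het] at heu; linarith, het]
  · -- SurjOn
    rintro y ⟨hyL, hyR⟩
    obtain ⟨s, t, hs, ht, rfl⟩ := mem_L y hyL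
    by_cases h : 0 ≤ 2*a*s - t
    · have hx : ζ * F s t = F (2*a*s - t) s := by
        unfold F; push_cast; linear_combination (t:ℂ) * key
      refine ⟨ζ * F s t, ⟨?_, mul_mem hζR hyR⟩, ?_⟩
      · rw [hx]
        exact F_mem _ _ ⟨h, by nlinarith [ha_nonneg, ha_lt, hs.1, hs.2, ht.1]⟩ hs
      · rw [hx, T_F, if_pos (by linarith [ht.1]),
          show 2*a*s - (2*a*s - t) = t by ring]
    · have hx : ζ * F s t + 1 = F (2*a*s - t + 1) s := by
        unfold F; push_cast; linear_combination (t:ℂ) * key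
      refine ⟨ζ * F s t + 1, ⟨?_, add_mem (mul_mem hζR hyR) (one_mem _)⟩, ?_⟩
      · rw [hx]
        exact F_mem _ _ ⟨by nlinarith [ha_nonneg, hs.1, ht.2], by linarith [not_le.mp h]⟩ hs
      · rw [hx, T_F, if_neg (by simp only [not_le]; linarith [ht.2]),
          show 2*a*s - (2*a*s - t + 1) + 1 = t by ring]
end

section
/- Let b = 1/(2cos(4π/9)). Then b is a Pisot number with minimal polynomial x³ - 3x² + 1, and γ = b² is a Pisot unit with minimal polynomial x³ - 9x² + 6x - 1. -/
/-!
With `c = cos (4π/9)` the triple-angle formula gives `8c³ - 6c + 1 = 0`, so `b = 1/(2c)` is a root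
of `f = X³ - 3X² + 1`, which is irreducible already modulo 2. Dividing `f` by `X - b` leaves a real
quadratic whose roots lie in `(-1, 1)` because `11/4 < b < 3`. Graeffe's root squaring
`f(x) f(-x) = -g(x²)` with `g = X³ - 9X² + 6X - 1` transfers all of this to `b²`, and the constant
term `-1` of `g` makes `b²` a unit.
-/

open Polynomial

theorem cubic_mul_cubic_neg {R : Type*} [CommRing R] (z : R) :
    (z ^ 3 - 3 * z ^ 2 + 1) * ((-z) ^ 3 - 3 * (-z) ^ 2 + 1) =
      -((z ^ 2) ^ 3 - 9 * (z ^ 2) ^ 2 + 6 * z ^ 2 - 1) := by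
  ring

theorem sq_cubic_of_cubic {R : Type*} [CommRing R] {b : R} (hb : b ^ 3 - 3 * b ^ 2 + 1 = 0) :
    (b ^ 2) ^ 3 - 9 * (b ^ 2) ^ 2 + 6 * b ^ 2 - 1 = 0 := by
  rw [← neg_eq_zero, ← cubic_mul_cubic_neg, hb, zero_mul]

theorem isIntegral_of_cubic {R : Type*} [CommRing R] {b : R} (hb : b ^ 3 - 3 * b ^ 2 + 1 = 0) :
    IsIntegral ℤ b :=
  ⟨X ^ 3 - 3 * X ^ 2 + 1, by monicity!, by simpa using hb⟩

theorem exists_isIntegral_mul_eq_one_of_cubic {R : Type*} [CommRing R] {γ : R}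
    (hγ : IsIntegral ℤ γ) (h : γ ^ 3 - 9 * γ ^ 2 + 6 * γ - 1 = 0) :
    ∃ u : R, IsIntegral ℤ u ∧ γ * u = 1 := by
  refine ⟨γ ^ 2 - 9 * γ + 6, ?_, by linear_combination h⟩
  have hconst (n : ℕ) [n.AtLeastTwo] : IsIntegral ℤ (OfNat.ofNat n : R) := by
    exact_mod_cast isIntegral_natCast (R := ℤ) (B := R) n
  exact ((hγ.pow 2).sub ((hconst 9).mul hγ)).add (hconst 6)

theorem Polynomial.Monic.irreducible_map_rat_of_forall_not_isRoot_zmod {p : ℤ[X]} (hp : p.Monic)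
    (n : ℕ) [Fact n.Prime] (hdeg : p.natDegree ∈ Finset.Icc 1 3)
    (hroot : ∀ a : ZMod n, ¬ (p.map (Int.castRingHom (ZMod n))).IsRoot a) :
    Irreducible (p.map (Int.castRingHom ℚ)) := by
  have hmod : Irreducible (p.map (Int.castRingHom (ZMod n))) :=
    irreducible_of_degree_le_three_of_not_isRoot (by rwa [hp.natDegree_map]) hroot
  exact hp.irreducible_iff_irreducible_map_fraction_map.mp
    (hp.irreducible_of_irreducible_map _ _ hmod)

theorem irreducible_X_pow_three_sub_three_mul_X_sq_add_one :
    Irreducible (X ^ 3 - 3 * X ^ 2 + 1 : ℚ[X]) := by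
  have hp : (X ^ 3 - 3 * X ^ 2 + 1 : ℤ[X]).Monic := by monicity!
  have hdeg : natDegree (X ^ 3 - 3 * X ^ 2 + 1 : ℤ[X]) = 3 := by compute_degree!
  simpa using hp.irreducible_map_rat_of_forall_not_isRoot_zmod 2 (by simp [hdeg]) (by simp; decide)

theorem irreducible_X_pow_three_sub_nine_mul_X_sq_add_six_mul_X_sub_one :
    Irreducible (X ^ 3 - 9 * X ^ 2 + 6 * X - 1 : ℚ[X]) := by
  have hp : (X ^ 3 - 9 * X ^ 2 + 6 * X - 1 : ℤ[X]).Monic := by monicity!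
  have hdeg : natDegree (X ^ 3 - 9 * X ^ 2 + 6 * X - 1 : ℤ[X]) = 3 := by compute_degree!
  simpa using hp.irreducible_map_rat_of_forall_not_isRoot_zmod 2 (by simp [hdeg]) (by simp; decide)

open Real

theorem cos_four_pi_div_nine_cubic :
    8 * cos (4 * π / 9) ^ 3 - 6 * cos (4 * π / 9) + 1 = 0 := by
  have h := cos_three_mul (4 * π / 9)
  rw [show 3 * (4 * π / 9) = π / 3 + π by ring, cos_add_pi, cos_pi_div_three] at h
  linarith

theorem cos_four_pi_div_nine_pos : 0 < cos (4 * π / 9) :=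
  cos_pos_of_mem_Ioo ⟨by linarith [pi_pos], by linarith [pi_pos]⟩

theorem cos_four_pi_div_nine_lt_half : cos (4 * π / 9) < 1 / 2 := by
  rw [← cos_pi_div_three]
  exact cos_lt_cos_of_nonneg_of_le_pi (by positivity) (by linarith [pi_pos]) (by linarith [pi_pos])

theorem one_div_two_cos_four_pi_div_nine_cubic :
    (1 / (2 * cos (4 * π / 9))) ^ 3 - 3 * (1 / (2 * cos (4 * π / 9))) ^ 2 + 1 = 0 := by
  have hc := cos_four_pi_div_nine_pos.ne'
  field_simp
  linear_combination cos_four_pi_div_nine_cubic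

theorem one_lt_one_div_two_cos_four_pi_div_nine : 1 < 1 / (2 * cos (4 * π / 9)) := by
  rw [lt_div_iff₀ (by linarith [cos_four_pi_div_nine_pos])]
  linarith [cos_four_pi_div_nine_lt_half]

theorem Complex.norm_lt_one_of_quadratic_eq_zero {p q : ℝ} (hdisc : 4 * q ≤ p ^ 2)
    (hp : |p| < 2) (h₁ : 0 < 1 + p + q) (h₂ : 0 < 1 - p + q) {z : ℂ}
    (hz : z ^ 2 + p * z + q = 0) : ‖z‖ < 1 := by
  obtain ⟨hp₁, hp₂⟩ := abs_lt.mp hp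
  set s := √(p ^ 2 - 4 * q)
  have hs : 0 ≤ s := sqrt_nonneg _
  have hs2 : s ^ 2 = p ^ 2 - 4 * q := sq_sqrt (by linarith)
  have hfactor : (z - ((-p + s) / 2 : ℝ)) * (z - ((-p - s) / 2 : ℝ)) = 0 := by
    have hs2C : (s : ℂ) ^ 2 = p ^ 2 - 4 * q := by exact_mod_cast hs2
    push_cast
    linear_combination hz - hs2C / 4
  rcases mul_eq_zero.mp hfactor with h | h <;>
    rw [sub_eq_zero.mp h, Complex.norm_real, norm_eq_abs, abs_lt] <;>
    constructor <;> nlinarith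

theorem root_bounds_of_cubic {b : ℝ} (hb : b ^ 3 - 3 * b ^ 2 + 1 = 0) (h1 : 1 < b) :
    11 / 4 < b ∧ b < 3 := by
  -- `b² (3 - b) = 1`
  have h3 : b < 3 := by nlinarith
  have h2 : 2 < b := by nlinarith
  constructor <;> nlinarith

theorem Complex.norm_lt_one_of_cubic_eq_zero {b : ℝ} (hb : b ^ 3 - 3 * b ^ 2 + 1 = 0) (h1 : 1 < b)
    {z : ℂ} (hz : z ^ 3 - 3 * z ^ 2 + 1 = 0) (hne : z ≠ b) : ‖z‖ < 1 := by
  obtain ⟨hlo, hhi⟩ := root_bounds_of_cubic hb h1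
  have hbC : (b : ℂ) ^ 3 - 3 * b ^ 2 + 1 = 0 := by exact_mod_cast hb
  have hquad : z ^ 2 + (b - 3 : ℝ) * z + (b ^ 2 - 3 * b : ℝ) = 0 := by
    have : (z - b) * (z ^ 2 + (b - 3 : ℝ) * z + (b ^ 2 - 3 * b : ℝ)) = 0 := by
      push_cast
      linear_combination hz - hbC
    exact (mul_eq_zero.mp this).resolve_left (sub_ne_zero.mpr hne)
  refine norm_lt_one_of_quadratic_eq_zero ?_ ?_ ?_ ?_ hquad
  · nlinarith
  · rw [abs_lt]; constructor <;> linarith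
  · nlinarith
  · nlinarith

theorem Complex.norm_lt_one_of_sq_cubic_eq_zero {b : ℝ} (hb : b ^ 3 - 3 * b ^ 2 + 1 = 0)
    (h1 : 1 < b) {w : ℂ} (hw : w ^ 3 - 9 * w ^ 2 + 6 * w - 1 = 0) (hne : w ≠ (b : ℂ) ^ 2) :
    ‖w‖ < 1 := by
  obtain ⟨z, rfl⟩ : ∃ z : ℂ, z ^ 2 = w := IsAlgClosed.exists_pow_nat_eq w two_pos
  rw [norm_pow, pow_lt_one_iff_of_nonneg (norm_nonneg z) two_ne_zero]
  have hprod := cubic_mul_cubic_neg z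
  rw [hw, neg_zero] at hprod
  rcases mul_eq_zero.mp hprod with h | h
  · exact norm_lt_one_of_cubic_eq_zero hb h1 h (by rintro rfl; exact hne rfl)
  · rw [← norm_neg]
    exact norm_lt_one_of_cubic_eq_zero hb h1 h (by rintro hz; exact hne (by rw [← hz, neg_sq]))

open Polynomial in
/-- b = 1/(2cos(4π/9)) is a Pisot number with minimal polynomial x³-3x²+1 and
γ = b² is a Pisot unit with minimal polynomial x³-9x²+6x-1. -/
theorem nine_fold_scaling_pisot (b : ℝ) (hb : b = 1 / (2 * Real.cos (4 * Real.pi / 9))) :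
    IsIntegral ℤ b ∧ 1 < b ∧
    minpoly ℚ b = X ^ 3 - 3 * X ^ 2 + 1 ∧
    (∀ z : ℂ, z ^ 3 - 3 * z ^ 2 + 1 = 0 → z ≠ (b : ℂ) → ‖z‖ < 1) ∧
    IsIntegral ℤ (b ^ 2) ∧ 1 < b ^ 2 ∧
    minpoly ℚ (b ^ 2) = X ^ 3 - 9 * X ^ 2 + 6 * X - 1 ∧
    (∀ z : ℂ, z ^ 3 - 9 * z ^ 2 + 6 * z - 1 = 0 → z ≠ ((b : ℂ)) ^ 2 → ‖z‖ < 1) ∧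
    (∃ u : ℝ, IsIntegral ℤ u ∧ b ^ 2 * u = 1) := by
  have hcubic : b ^ 3 - 3 * b ^ 2 + 1 = 0 := hb ▸ one_div_two_cos_four_pi_div_nine_cubic
  have hone : 1 < b := hb ▸ one_lt_one_div_two_cos_four_pi_div_nine
  have hsq := sq_cubic_of_cubic hcubic
  have hint := isIntegral_of_cubic hcubic
  refine ⟨hint, hone, ?_, fun z hz hne ↦ Complex.norm_lt_one_of_cubic_eq_zero hcubic hone hz hne,
    hint.pow 2, one_lt_pow₀ hone two_ne_zero, ?_,
    fun w hw hne ↦ Complex.norm_lt_one_of_sq_cubic_eq_zero hcubic hone hw hne,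
    exists_isIntegral_mul_eq_one_of_cubic (hint.pow 2) hsq⟩
  · exact (minpoly.eq_of_irreducible_of_monic irreducible_X_pow_three_sub_three_mul_X_sq_add_one
      (by simpa [map_ofNat] using hcubic) (by monicity!)).symm
  · exact (minpoly.eq_of_irreducible_of_monic
      irreducible_X_pow_three_sub_nine_mul_X_sq_add_six_mul_X_sub_one
      (by simpa [map_ofNat] using hsq) (by monicity!)).symm
end
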